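/- arXiv:1509.07533 — 9 statements merged into one kernel-verified Lean document; each statement's English description precedes it below -/
import Mathlib

section
/- Suppose the finite sequence (a_1, …, a_n) is partitioned into consecutive blocks S_1, …, S_m, each of which is a slice, with slice-weights s_1, …, s_m. Then (a_1, …, a_n) satisfies (ASC) if and only if (s_1, …, s_m) satisfies (ASC). Consequently (a_1, …, a_n) is a slice (resp. ev-sequence) if and only if (s_1, …, s_m) is, and in that case both have the same weight. -/
/-- Condition (ASC): all even-length initial alternating sums are ≤ 0. -/
def ASC (l : List ℝ) : Prop :=
  ∀ k : ℕ, 1 ≤ k → 2 * k ≤ l.length → (l.take (2 * k)).alternatingSum ≤ 0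

/-- A slice: odd length, and both the sequence and its reverse satisfy (ASC). -/
def IsSlice (l : List ℝ) : Prop := Odd l.length ∧ ASC l ∧ ASC l.reverse

/-- An ev-sequence: even length, satisfying (ASC). -/
def IsEvSeq (l : List ℝ) : Prop := Even l.length ∧ ASC l

/-!
Every slice has odd length, so the signs of the alternating sum of `S.flatten` flip exactly at
block boundaries: the alternating sum up to the end of the `j`-th block is the `j`-th prefix
alternating sum of the weights. An even-length prefix ending inside a block is no worse than a
neighbouring boundary: after an even number of whole blocks, (ASC) of the current block only
lowers the sum; after an odd number, (ASC) of the reversed current block shows that the sum is at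
most the sum up to the end of that block. Reversing every block and their order gives slices with
the same weights, which transfers the result to the reversed sequences.
-/

namespace List

variable {G : Type*} [AddCommGroup G]

theorem alternatingSum_append_of_even {l₁ : List G} (l₂ : List G) (h : Even l₁.length) :
    (l₁ ++ l₂).alternatingSum = l₁.alternatingSum + l₂.alternatingSum := by
  rw [alternatingSum_append, h.neg_one_pow, one_zsmul]

theorem alternatingSum_append_of_odd {l₁ : List G} (l₂ : List G) (h : Odd l₁.length) :
    (l₁ ++ l₂).alternatingSum = l₁.alternatingSum - l₂.alternatingSum := by
  rw [alternatingSum_append, h.neg_one_pow, neg_one_zsmul, sub_eq_add_neg]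

theorem alternatingSum_reverse_of_even {l : List G} (h : Even l.length) :
    l.reverse.alternatingSum = -l.alternatingSum := by
  rw [alternatingSum_reverse, h.add_one.neg_one_pow, neg_one_zsmul]

theorem alternatingSum_reverse_of_odd {l : List G} (h : Odd l.length) :
    l.reverse.alternatingSum = l.alternatingSum := by
  rw [alternatingSum_reverse, h.add_one.neg_one_pow, one_zsmul]

theorem alternatingSum_flatten_of_odd {L : List (List G)} (h : ∀ l ∈ L, Odd l.length) :
    L.flatten.alternatingSum = (L.map alternatingSum).alternatingSum := by
  induction L with
  | nil => rfl
  | cons l L ih =>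
    rw [flatten_cons, alternatingSum_append_of_odd _ (h l mem_cons_self), map_cons,
      alternatingSum_cons, ih fun l' hl' => h l' (mem_cons_of_mem l hl')]

theorem even_length_flatten_iff_of_odd {α : Type*} {L : List (List α)}
    (h : ∀ l ∈ L, Odd l.length) : Even L.flatten.length ↔ Even L.length := by
  induction L with
  | nil => simp
  | cons l L ih =>
    have hl := Nat.not_even_iff_odd.mpr (h l mem_cons_self)
    rw [flatten_cons, length_append, length_cons, Nat.even_add, Nat.even_add_one,
      ih fun l' hl' => h l' (mem_cons_of_mem l hl')]
    tauto

end List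

/-- (ASC) for the continuation `l` of an even-length prefix whose alternating sum is `c`. -/
def ShiftedASC (c : ℝ) (l : List ℝ) : Prop :=
  ∀ n, Even n → n ≤ l.length → c + (l.take n).alternatingSum ≤ 0

theorem asc_iff_shiftedASC_zero {l : List ℝ} : ASC l ↔ ShiftedASC 0 l := by
  refine ⟨fun h n ⟨k, hk⟩ hn => ?_, fun h k _ hk => by simpa using h (2 * k) (even_two_mul k) hk⟩
  obtain rfl | hk0 := Nat.eq_zero_or_pos k
  · simp [hk]
  · simpa [← two_mul, hk] using h k hk0 (by omega)

theorem ASC.alternatingSum_take_nonpos {l : List ℝ} (h : ASC l) {n : ℕ} (hn : Even n)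
    (hle : n ≤ l.length) : (l.take n).alternatingSum ≤ 0 := by
  simpa using asc_iff_shiftedASC_zero.mp h n hn hle

theorem ShiftedASC.nonpos {c : ℝ} {l : List ℝ} (h : ShiftedASC c l) : c ≤ 0 := by
  simpa using h 0 .zero (Nat.zero_le _)

theorem shiftedASC_singleton {c x : ℝ} : ShiftedASC c [x] ↔ c ≤ 0 := by
  refine ⟨ShiftedASC.nonpos, fun hc n hn hle => ?_⟩
  obtain rfl : n = 0 := by
    rcases hn with ⟨k, rfl⟩
    simp only [List.length_singleton] at hle
    omega
  simpa using hc

theorem shiftedASC_pair {c x y : ℝ} : ShiftedASC c [x, y] ↔ c ≤ 0 ∧ c + (x - y) ≤ 0 := by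
  refine ⟨fun h => ⟨h.nonpos, by simpa using h 2 even_two le_rfl⟩, fun ⟨hc, hxy⟩ n hn hle => ?_⟩
  simp only [List.length_cons, List.length_nil] at hle
  interval_cases n
  · simpa using hc
  · exact absurd hn (by decide)
  · simpa using hxy

theorem shiftedASC_append_of_even {c : ℝ} {p : List ℝ} (l : List ℝ) (hp : Even p.length) :
    ShiftedASC c (p ++ l) ↔ ShiftedASC c p ∧ ShiftedASC (c + p.alternatingSum) l := by
  constructor
  · intro h
    refine ⟨fun n hn hle => ?_, fun n hn hle => ?_⟩
    · simpa [List.take_append_of_le_length hle] using h n hn (by rw [List.length_append]; omega)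
    · have := h (p.length + n) (hp.add hn) (by simp [hle])
      rwa [List.take_append, List.take_of_length_le (by omega), Nat.add_sub_cancel_left,
        List.alternatingSum_append_of_even _ hp, ← add_assoc] at this
  · rintro ⟨hp', hl⟩ n hn hle
    by_cases hnp : n ≤ p.length
    · rw [List.take_append_of_le_length hnp]
      exact hp' n hn hnp
    · have hl' := hl (n - p.length) ((Nat.even_sub (by omega)).mpr (iff_of_true hn hp))
        (by rw [List.length_append] at hle; omega)
      rwa [List.take_append, List.take_of_length_le (by omega),
        List.alternatingSum_append_of_even _ hp, ← add_assoc]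

theorem IsSlice.reverse {l : List ℝ} (h : IsSlice l) : IsSlice l.reverse :=
  ⟨by simpa using h.1, h.2.2, by simpa using h.2.1⟩

theorem IsSlice.alternatingSum_le_take {l : List ℝ} (h : IsSlice l) {n : ℕ} (hn : Odd n)
    (hle : n ≤ l.length) : l.alternatingSum ≤ (l.take n).alternatingSum := by
  have hdrop : Even (l.drop n).length := by
    rw [List.length_drop]
    exact Nat.Odd.sub_odd h.1 hn
  have htail : (l.drop n).reverse.alternatingSum ≤ 0 := by
    rw [List.reverse_drop]
    exact h.2.2.alternatingSum_take_nonpos (by simpa using hdrop) (by simp)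
  have hsplit : l.alternatingSum = (l.take n).alternatingSum - (l.drop n).alternatingSum := by
    conv_lhs => rw [← List.take_append_drop n l]
    exact List.alternatingSum_append_of_odd _ (by simpa [hle] using hn)
  rw [List.alternatingSum_reverse_of_even hdrop] at htail
  linarith

theorem IsSlice.shiftedASC_iff {c : ℝ} {t : List ℝ} (ht : IsSlice t) :
    ShiftedASC c t ↔ ShiftedASC c [t.alternatingSum] := by
  rw [shiftedASC_singleton]
  exact ⟨ShiftedASC.nonpos, fun hc n hn hle => by
    linarith [ht.2.1.alternatingSum_take_nonpos hn hle]⟩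

theorem IsSlice.shiftedASC_append_iff {c : ℝ} {t u : List ℝ} (ht : IsSlice t) (hu : IsSlice u) :
    ShiftedASC c (t ++ u) ↔ ShiftedASC c [t.alternatingSum, u.alternatingSum] := by
  rw [shiftedASC_pair, ← List.alternatingSum_append_of_odd _ ht.1]
  refine ⟨fun h => ⟨h.nonpos, by
    simpa only [List.take_length] using h (t ++ u).length (by simpa using ht.1.add_odd hu.1) le_rfl⟩,
    fun ⟨hc, htu⟩ n hn hle => ?_⟩
  by_cases hnt : n ≤ t.length
  · rw [List.take_append_of_le_length hnt]
    linarith [ht.2.1.alternatingSum_take_nonpos hn hnt]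
  · have hr : Odd (n - t.length) := (Nat.odd_sub (by omega)).mpr
      (iff_of_false (Nat.not_odd_iff_even.mpr hn) (Nat.not_even_iff_odd.mpr ht.1))
    have hu' := hu.alternatingSum_le_take hr (by rw [List.length_append] at hle; omega)
    rw [List.alternatingSum_append_of_odd _ ht.1] at htu
    rw [List.take_append, List.take_of_length_le (by omega), List.alternatingSum_append_of_odd _ ht.1]
    linarith

/-- The blocks are peeled off two at a time, their weight sum moving into the shift `c`. -/
theorem shiftedASC_flatten_iff :
    ∀ {S : List (List ℝ)}, (∀ s ∈ S, IsSlice s) →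
      ∀ c, ShiftedASC c S.flatten ↔ ShiftedASC c (S.map List.alternatingSum)
  | [], _, _ => Iff.rfl
  | [t], hS, _ => by simpa using (hS t List.mem_cons_self).shiftedASC_iff
  | t :: u :: S, hS, c => by
    have ht := hS t (by simp)
    have hu := hS u (by simp)
    have htu : Even (t ++ u).length := by simpa using ht.1.add_odd hu.1
    have hweights : (t :: u :: S).map List.alternatingSum =
        [t.alternatingSum, u.alternatingSum] ++ S.map List.alternatingSum := rfl
    rw [hweights, shiftedASC_append_of_even _ even_two, List.alternatingSum_cons_cons,
      List.alternatingSum_nil, add_zero,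
      List.flatten_cons, List.flatten_cons, ← List.append_assoc,
      shiftedASC_append_of_even _ htu, ht.shiftedASC_append_iff hu,
      List.alternatingSum_append_of_odd _ ht.1,
      shiftedASC_flatten_iff (fun s hs => hS s (by simp [hs]))]

theorem asc_flatten_iff {S : List (List ℝ)} (hS : ∀ s ∈ S, IsSlice s) :
    ASC S.flatten ↔ ASC (S.map List.alternatingSum) := by
  simpa only [asc_iff_shiftedASC_zero] using shiftedASC_flatten_iff hS 0

theorem asc_reverse_flatten_iff {S : List (List ℝ)} (hS : ∀ s ∈ S, IsSlice s) :
    ASC S.flatten.reverse ↔ ASC (S.map List.alternatingSum).reverse := by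
  have hR : ∀ s ∈ (S.map List.reverse).reverse, IsSlice s := by
    simp only [List.mem_reverse, List.mem_map, forall_exists_index, and_imp]
    rintro _ s hs rfl
    exact (hS s hs).reverse
  have hweights : ((S.map List.reverse).reverse).map List.alternatingSum =
      (S.map List.alternatingSum).reverse := by
    rw [List.map_reverse, List.map_map]
    congr 1
    exact List.map_congr_left fun s hs => List.alternatingSum_reverse_of_odd (hS s hs).1
  rw [List.reverse_flatten, asc_flatten_iff hR, hweights]

/-- If a sequence is partitioned into consecutive slices, then (ASC) (resp. being a slice,
being an ev-sequence) holds for the sequence iff it holds for the sequence of slice-weights,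
and the alternating sums agree. -/
theorem asc_iff_slice_weights (S : List (List ℝ)) (hS : ∀ s ∈ S, IsSlice s) :
    (ASC S.flatten ↔ ASC (S.map List.alternatingSum)) ∧
    (IsSlice S.flatten ↔ IsSlice (S.map List.alternatingSum)) ∧
    (IsEvSeq S.flatten ↔ IsEvSeq (S.map List.alternatingSum)) ∧
    S.flatten.alternatingSum = (S.map List.alternatingSum).alternatingSum := by
  have hodd : ∀ s ∈ S, Odd s.length := fun s hs => (hS s hs).1
  have hpar : Even S.flatten.length ↔ Even (S.map List.alternatingSum).length := by
    rw [List.length_map, List.even_length_flatten_iff_of_odd hodd]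
  refine ⟨asc_flatten_iff hS, ?_, ?_, List.alternatingSum_flatten_of_odd hodd⟩
  · simp only [IsSlice, ← Nat.not_even_iff_odd, hpar, asc_flatten_iff hS,
      asc_reverse_flatten_iff hS]
  · simp only [IsEvSeq, hpar, asc_flatten_iff hS]
end

section
/- Every finite sequence (a_1, …, a_n) of real numbers can be partitioned into consecutive blocks S_1, S_2, …, S_m, X, where possibly m = 0 or X is missing, such that each S_i is a slice, X is an ev-sequence, and the sequence (s_1, …, s_m) of slice-weights is strictly decreasing. -/
open List

theorem Set.Finite.exists_max_image_min_tiebreak {α β γ : Type*} [LinearOrder β] [LinearOrder γ]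
    {s : Set α} (hs : s.Finite) (hne : s.Nonempty) (f : α → β) (g : α → γ) :
    ∃ x ∈ s, ∀ y ∈ s, f y ≤ f x ∧ (g y < g x → f y < f x) := by
  obtain ⟨m, hms, hm⟩ := s.exists_max_image f hs hne
  obtain ⟨x, ⟨hxs, hxm⟩, hx⟩ :=
    Set.exists_min_image {y ∈ s | f y = f m} g (hs.sep _) ⟨m, hms, rfl⟩
  refine ⟨x, hxs, fun y hys => ⟨hxm ▸ hm y hys, fun hgy => ?_⟩⟩
  refine lt_of_le_of_ne (hxm ▸ hm y hys) fun hfy => ?_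
  exact (hx y ⟨hys, hfy.trans hxm⟩).not_gt hgy

section SignedAltSum

variable {R : Type*} [CommRing R]

def signedAltSum (l : List R) : R := (-1) ^ l.length * l.alternatingSum

theorem signedAltSum_append (u v : List R) :
    signedAltSum (u ++ v) = (-1) ^ v.length * signedAltSum u + signedAltSum v := by
  have hsq : (-1 : R) ^ u.length * (-1) ^ u.length = 1 := by
    rw [← pow_add]
    exact Even.neg_one_pow ⟨_, rfl⟩
  simp only [signedAltSum, alternatingSum_append, length_append, zsmul_eq_mul, Int.cast_pow,
    Int.cast_neg, Int.cast_one, pow_add]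
  linear_combination (-1 : R) ^ v.length * v.alternatingSum * hsq

variable {u v : List R}

theorem signedAltSum_of_even (hv : Even v.length) : signedAltSum v = v.alternatingSum := by
  rw [signedAltSum, hv.neg_one_pow, one_mul]

theorem signedAltSum_of_odd (hv : Odd v.length) : signedAltSum v = -v.alternatingSum := by
  rw [signedAltSum, hv.neg_one_pow, neg_one_mul]

theorem signedAltSum_append_of_even (hv : Even v.length) :
    signedAltSum (u ++ v) = signedAltSum u + signedAltSum v := by
  rw [signedAltSum_append, hv.neg_one_pow, one_mul]

theorem signedAltSum_append_of_odd (hv : Odd v.length) :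
    signedAltSum (u ++ v) = signedAltSum v - signedAltSum u := by
  rw [signedAltSum_append, hv.neg_one_pow]
  ring

end SignedAltSum

theorem List.alternatingSum_reverse_of_even_s4 {G : Type*} [AddCommGroup G] {l : List G}
    (hl : Even l.length) : l.reverse.alternatingSum = -l.alternatingSum := by
  rw [alternatingSum_reverse, hl.add_one.neg_one_pow, neg_one_zsmul]

theorem asc_iff_prefix {l : List ℝ} :
    ASC l ↔ ∀ u w, u ++ w = l → Even u.length → u.alternatingSum ≤ 0 := by
  constructor
  · rintro h u w rfl ⟨k, hk⟩
    rcases k.eq_zero_or_pos with rfl | hk0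
    · simp_all
    · have h2k : 2 * k ≤ (u ++ w).length := by rw [length_append]; omega
      simpa [hk, ← two_mul] using h k hk0 h2k
  · intro h k _ h2k
    exact h _ _ (take_append_drop _ l) ⟨k, by rw [length_take]; omega⟩

theorem asc_reverse_iff_suffix {l : List ℝ} :
    ASC l.reverse ↔ ∀ u w, u ++ w = l → Even w.length → 0 ≤ w.alternatingSum := by
  rw [asc_iff_prefix]
  constructor
  · rintro h u w rfl hw
    have := h w.reverse u.reverse (by simp) (by simpa using hw)
    rw [alternatingSum_reverse_of_even_s4 hw] at this
    linarith
  · intro h u w huw hu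
    have := h w.reverse u.reverse (by simp [← reverse_append, huw]) (by simpa using hu)
    rw [alternatingSum_reverse_of_even_s4 (by simpa using hu)] at this
    linarith

theorem ASC.concat_of_even {l : List ℝ} (h : ASC l) (hl : Even l.length) (y : ℝ) :
    ASC (l ++ [y]) := by
  intro k hk h2k
  have h2k' : 2 * k ≤ l.length := by
    obtain ⟨m, hm⟩ := hl
    simp only [length_append, length_singleton] at h2k
    omega
  rw [take_append_of_le_length h2k']
  exact h k hk h2k'

section MaxSplit

variable {u w : List ℝ}

theorem isEvSeq_of_max (hw : Even w.length)
    (hmax : ∀ u' w', u' ++ w' = u ++ w → Even w'.length → signedAltSum u' ≤ signedAltSum u) :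
    IsEvSeq w := by
  refine ⟨hw, asc_iff_prefix.2 fun v r hvr hv => ?_⟩
  have hr : Even r.length := by
    rw [← hvr, length_append] at hw
    exact (Nat.even_add.1 hw).1 hv
  have := hmax (u ++ v) r (by rw [append_assoc, hvr]) hr
  rw [signedAltSum_append_of_even hv, signedAltSum_of_even hv] at this
  linarith

theorem asc_reverse_of_max {A Z : List ℝ} (hw : Even w.length)
    (hmax : ∀ u' w', u' ++ w' = A ++ Z ++ w → Even w'.length →
      signedAltSum u' ≤ signedAltSum (A ++ Z)) :
    ASC Z.reverse := by
  refine asc_reverse_iff_suffix.2 fun p v hpv hv => ?_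
  have := hmax (A ++ p) (v ++ w) (by simp [← hpv]) (by simp [Nat.even_add, hv, hw])
  rw [← hpv, ← append_assoc, signedAltSum_append_of_even hv, signedAltSum_of_even hv] at this
  linarith

theorem alternatingSum_lt_of_first_max {A P Z : List ℝ}
    (hP : Odd P.length) (hZ : Odd Z.length) (hw : Even w.length)
    (hfirst : ∀ u' w', u' ++ w' = A ++ P ++ Z ++ w → Even w'.length →
      u'.length < (A ++ P ++ Z).length → signedAltSum u' < signedAltSum (A ++ P ++ Z)) :
    Z.alternatingSum < P.alternatingSum := by
  have hPZw : Even (P ++ Z ++ w).length := by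
    rw [length_append, length_append]
    exact (hP.add_odd hZ).add hw
  have := hfirst A (P ++ Z ++ w) (by simp) hPZw
    (by simp only [length_append]; have := hP.pos; omega)
  rw [signedAltSum_append_of_odd hZ, signedAltSum_append_of_odd hP, signedAltSum_of_odd hP,
    signedAltSum_of_odd hZ] at this
  linarith

end MaxSplit

theorem exists_first_max_split (l : List ℝ) :
    ∃ u w, u ++ w = l ∧ Even w.length ∧ ∀ u' w', u' ++ w' = l → Even w'.length →
      signedAltSum u' ≤ signedAltSum u ∧
        (u'.length < u.length → signedAltSum u' < signedAltSum u) := by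
  let s : Set (List ℝ × List ℝ) := {p | p.1 ++ p.2 = l ∧ Even p.2.length}
  have hs : s.Finite := by
    refine (l.inits.finite_toSet.prod l.tails.finite_toSet).subset fun p hp => ?_
    simp only [Set.mem_prod, Set.mem_ofPred_eq, mem_inits, mem_tails]
    exact ⟨⟨p.2, hp.1⟩, ⟨p.1, hp.1⟩⟩
  obtain ⟨⟨u, w⟩, ⟨huw, hw⟩, hmax⟩ := hs.exists_max_image_min_tiebreak ⟨(l, []), by simp [s]⟩
    (fun p => signedAltSum p.1) (fun p => p.1.length)
  exact ⟨u, w, huw, hw, fun u' w' h h' => hmax (u', w') ⟨h, h'⟩⟩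

/-- Every finite sequence can be partitioned as S_1 … S_m X with the S_i slices,
X an ev-sequence (possibly empty, i.e. missing, and possibly m = 0), and the
slice-weights strictly decreasing. -/
theorem exists_decreasing_slice_partition (a : List ℝ) :
    ∃ (S : List (List ℝ)) (X : List ℝ), S.flatten ++ X = a ∧ (∀ s ∈ S, IsSlice s) ∧
      IsEvSeq X ∧ List.Chain' (· > ·) (S.map List.alternatingSum) := by
  induction hn : a.length using Nat.strong_induction_on generalizing a with
  | _ n ih =>
  obtain ⟨u, w, rfl, hw, hmax⟩ := exists_first_max_split a
  have hev := isEvSeq_of_max hw fun u' w' h h' => (hmax u' w' h h').1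
  rcases eq_nil_or_concat' u with rfl | ⟨l, y, rfl⟩
  · exact ⟨[], w, rfl, by simp, hev, isChain_nil⟩
  obtain ⟨S, X, rfl, hS, ⟨hX, hXasc⟩, hchain⟩ := ih l.length (by simp [← hn]) l rfl
  have hZ : IsSlice (X ++ [y]) :=
    ⟨by simpa using hX.add_one, hXasc.concat_of_even hX y,
      asc_reverse_of_max (A := S.flatten) hw fun u' w' h h' => by
        simpa using (hmax u' w' (by simpa using h) h').1⟩
  refine ⟨S ++ [X ++ [y]], w, by simp, ?_, hev, ?_⟩
  · simpa [or_imp, forall_and] using ⟨hS, hZ⟩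
  rcases eq_nil_or_concat' S with rfl | ⟨S, P, rfl⟩
  · exact isChain_singleton _
  have hlt := alternatingSum_lt_of_first_max (A := S.flatten) (hS P (by simp)).1 hZ.1 hw
    fun u' w' h h' hlen => by
      simpa using (hmax u' w' (by simpa using h) h').2 (by simpa using hlen)
  rw [map_append, map_singleton] at hchain
  rw [map_append, map_append, map_singleton, map_singleton, append_assoc, singleton_append]
  exact isChain_append_cons_cons.2 ⟨hchain, hlt, isChain_singleton _⟩
end

section
/- For a finite sequence (s_1, …, s_m) of real numbers, the following are equivalent: (i) for every j with 1 < j < m, either s_j < s_{j+1} or s_j < s_{j−1}; (ii) letting k be the smallest index achieving the minimum of the sequence and ℓ the largest such index, one has ℓ = k or ℓ = k + 1, the subsequence (s_1, …, s_k) is strictly decreasing, and (s_ℓ, …, s_m) is strictly increasing. -/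
/-- Equivalence of the two descriptions of a U-shaped sequence (s_1,…,s_m), written with
1-based indices: no interior weak relative maxima iff, with k the smallest and ℓ the
largest index achieving the minimum, ℓ = k or ℓ = k+1, (s_1,…,s_k) is strictly
decreasing and (s_ℓ,…,s_m) is strictly increasing. -/
theorem uShaped_iff (m k ℓ : ℕ) (s : ℕ → ℝ) (hm : 1 ≤ m)
    (hk : k ∈ Set.Icc 1 m) (hl : ℓ ∈ Set.Icc 1 m)
    (hkmin : ∀ i ∈ Set.Icc 1 m, s k ≤ s i)
    (hksmall : ∀ i ∈ Set.Icc 1 m, s i = s k → k ≤ i)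
    (hlval : s ℓ = s k)
    (hllarge : ∀ i ∈ Set.Icc 1 m, s i = s k → i ≤ ℓ) :
    ((∀ j, 1 < j → j < m → s j < s (j + 1) ∨ s j < s (j - 1)) ↔
      ((ℓ = k ∨ ℓ = k + 1) ∧ StrictAntiOn s (Set.Icc 1 k) ∧
        StrictMonoOn s (Set.Icc ℓ m))) := by
  obtain ⟨hk1, hkm⟩ := hk
  obtain ⟨hl1, hlm⟩ := hl
  have hkl : k ≤ ℓ := hksmall ℓ ⟨hl1, hlm⟩ hlval
  constructor
  · intro H
    -- increases propagate to the right
    have A : ∀ j, 1 ≤ j → s j < s (j + 1) → ∀ i, j ≤ i → i < m → s i < s (i + 1) := by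
      intro j hj1 hstep i hji
      induction i, hji using Nat.le_induction with
      | base => intro _; exact hstep
      | succ n hn ih =>
        intro hnm
        have h1 : s n < s (n + 1) := ih (by omega)
        rcases H (n + 1) (by omega) hnm with h | h
        · exact h
        · simp only [Nat.add_sub_cancel] at h
          exact absurd h (not_lt.mpr h1.le)
    -- adjacent decreases on [1, k]
    have dec : ∀ i, 1 < i → i ≤ k → s i < s (i - 1) := by
      have B : ∀ d, 1 < k - d → s (k - d) < s (k - d - 1) := by
        intro d
        induction d with
        | zero =>
          intro hkd
          simp only [Nat.sub_zero] at *
          have h1 : s k ≤ s (k - 1) := hkmin (k - 1) ⟨by omega, by omega⟩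
          rcases eq_or_lt_of_le h1 with h | h
          · exact absurd (hksmall (k - 1) ⟨by omega, by omega⟩ h.symm) (by omega)
          · exact h
        | succ d ih =>
          intro hkd
          have h2 := ih (by omega)
          have he : k - d - 1 + 1 = k - d := by omega
          have he2 : k - (d + 1) = k - d - 1 := by omega
          rcases H (k - d - 1) (by omega) (by omega) with h | h
          · rw [he] at h
            exact absurd h (not_lt.mpr h2.le)
          · rw [he2]
            exact h
      intro i hi hik
      have h := B (k - i) (by omega)
      have he : k - (k - i) = i := by omega
      rw [he] at h
      exact h
    -- adjacent increases on [ℓ, m]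
    have inc : ∀ i, ℓ ≤ i → i < m → s i < s (i + 1) := by
      have hbase : ℓ < m → s ℓ < s (ℓ + 1) := by
        intro hlm'
        have h1 : s k ≤ s (ℓ + 1) := hkmin (ℓ + 1) ⟨by omega, by omega⟩
        rw [← hlval] at h1
        rcases eq_or_lt_of_le h1 with h | h
        · have heq : s (ℓ + 1) = s k := by rw [← h, hlval]
          exact absurd (hllarge (ℓ + 1) ⟨by omega, by omega⟩ heq) (by omega)
        · exact h
      intro i hli him
      exact A ℓ hl1 (hbase (by omega)) i hli him
    have hlk : ℓ = k ∨ ℓ = k + 1 := by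
      by_contra hc
      push_neg at hc
      have h2 : k + 2 ≤ ℓ := by omega
      have hstep : s (k + 1) < s (k + 2) := by
        rcases H (k + 1) (by omega) (by omega) with h | h
        · exact h
        · simp only [Nat.add_sub_cancel] at h
          exact absurd h (not_lt.mpr (hkmin (k + 1) ⟨by omega, by omega⟩))
      have h3 := A (k + 1) (by omega) hstep (ℓ - 1) (by omega) (by omega)
      have he : ℓ - 1 + 1 = ℓ := by omega
      rw [he, hlval] at h3
      exact absurd h3 (not_lt.mpr (hkmin (ℓ - 1) ⟨by omega, by omega⟩))
    refine ⟨hlk, ?_, ?_⟩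
    · have chain : ∀ b a, 1 ≤ a → a < b → b ≤ k → s b < s a := by
        intro b
        induction b with
        | zero => intro a _ h _; omega
        | succ b ih =>
          intro a ha1 hab hbk
          have hd := dec (b + 1) (by omega) hbk
          simp only [Nat.add_sub_cancel] at hd
          rcases Nat.lt_succ_iff_lt_or_eq.mp hab with h | h
          · exact hd.trans (ih a ha1 h (by omega))
          · rw [h]; exact hd
      intro a ha b hb hab
      exact chain b a ha.1 hab hb.2
    · have chain : ∀ b a, ℓ ≤ a → a < b → b ≤ m → s a < s b := by
        intro b
        induction b with
        | zero => intro a _ h _; omega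
        | succ b ih =>
          intro a ha hab hbm
          have hi := inc b (by omega) (by omega)
          rcases Nat.lt_succ_iff_lt_or_eq.mp hab with h | h
          · exact (ih a ha h (by omega)).trans hi
          · rw [h]; exact hi
      intro a ha b hb hab
      exact chain b a ha.1 hab hb.2
  · rintro ⟨hlk, hanti, hmono⟩ j hj1 hjm
    have hlk' : ℓ ≤ k + 1 := by rcases hlk with h | h <;> omega
    by_cases hjk : j ≤ k
    · exact Or.inr (hanti (show j - 1 ∈ Set.Icc 1 k from ⟨by omega, by omega⟩)
        (show j ∈ Set.Icc 1 k from ⟨by omega, hjk⟩) (by omega))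
    · exact Or.inl (hmono (show j ∈ Set.Icc ℓ m from ⟨by omega, by omega⟩)
        (show j + 1 ∈ Set.Icc ℓ m from ⟨by omega, by omega⟩) (by omega))
end

section
/- Let (b_1, …, b_q) be a sequence of even length q such that its reverse satisfies (ASC) and its alternating sum Σ_{i=1}^q (−1)^{i−1} b_i equals 0. Then there exists an odd j with 1 ≤ j < q such that (b_1, …, b_j) and (b_{j+1}, …, b_q) are both slices of the same weight. In fact one may take j to be the largest odd index < q for which Σ_{i=1}^j (−1)^{i−1} b_i is minimal among odd indices < q. -/
private lemma altSum_take_add (b : List ℝ) {i : ℕ} (h : i ≤ b.length) (n : ℕ) :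
    (b.take (i + n)).alternatingSum =
      (b.take i).alternatingSum + (-1 : ℤ) ^ i • ((b.drop i).take n).alternatingSum := by
  rw [List.take_add, List.alternatingSum_append, List.length_take, min_eq_left h]

private lemma altSum_drop (b : List ℝ) {i : ℕ} (h : i ≤ b.length) :
    b.alternatingSum =
      (b.take i).alternatingSum + (-1 : ℤ) ^ i • (b.drop i).alternatingSum := by
  conv_lhs => rw [← List.take_append_drop i b]
  rw [List.alternatingSum_append, List.length_take, min_eq_left h]

private lemma rev_take (b : List ℝ) (n : ℕ) :
    b.reverse.take n = (b.drop (b.length - n)).reverse := by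
  have h1 : (b.reverse.take n).reverse = b.drop (b.length - n) := by
    rw [List.reverse_take, List.reverse_reverse, List.length_reverse]
  rw [← h1, List.reverse_reverse]

private lemma altSum_reverse_even (l : List ℝ) (h : Even l.length) :
    l.reverse.alternatingSum = - l.alternatingSum := by
  rw [List.alternatingSum_reverse, Odd.neg_one_pow h.add_one, neg_one_zsmul]

private lemma take_even_nonpos (b : List ℝ) (heven : Even b.length) (hrev : ASC b.reverse)
    (hsum : b.alternatingSum = 0) {e : ℕ} (he : Even e) (heq : e ≤ b.length) :
    (b.take e).alternatingSum ≤ 0 := by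
  rcases eq_or_lt_of_le heq with h | h
  · rw [h, List.take_length, hsum]
  · obtain ⟨s, hs⟩ := heven
    obtain ⟨t, ht⟩ := he
    obtain ⟨k, hk⟩ : ∃ k, b.length - e = 2 * k := ⟨s - t, by omega⟩
    have h1 := hrev k (by omega) (by rw [List.length_reverse]; omega)
    rw [← hk, rev_take] at h1
    have h2 : b.length - (b.length - e) = e := by omega
    rw [h2, altSum_reverse_even (b.drop e) (by rw [List.length_drop]; exact ⟨s - t, by omega⟩)]
      at h1
    have h3 := altSum_drop b (le_of_lt h)
    rw [hsum, Even.neg_one_pow ⟨t, ht⟩, one_zsmul] at h3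
    linarith

/-- An even-length sequence whose reverse satisfies (ASC) and whose alternating sum is 0
splits as S'S'' where S' and S'' are slices of the same weight; one may take the split
point j to be the largest odd index < q minimizing the initial alternating sum. -/
theorem even_zero_weight_splits_into_two_slices (b : List ℝ) (hne : b ≠ [])
    (heven : Even b.length) (hrev : ASC b.reverse) (hsum : b.alternatingSum = 0) :
    ∃ j : ℕ, Odd j ∧ j < b.length ∧ IsSlice (b.take j) ∧ IsSlice (b.drop j) ∧
      (b.take j).alternatingSum = (b.drop j).alternatingSum ∧
      (∀ i : ℕ, Odd i → i < b.length →
        (b.take j).alternatingSum ≤ (b.take i).alternatingSum) ∧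
      (∀ i : ℕ, Odd i → i < b.length →
        (b.take i).alternatingSum = (b.take j).alternatingSum → i ≤ j) := by
  classical
  have hq0 : 0 < b.length := List.length_pos_iff.mpr hne
  obtain ⟨s, hs⟩ := heven
  have hq2 : 2 ≤ b.length := by omega
  set O : Finset ℕ := (Finset.range b.length).filter (fun i => Odd i) with hOdef
  have h1O : (1 : ℕ) ∈ O := by
    simp only [hOdef, Finset.mem_filter, Finset.mem_range]
    exact ⟨by omega, odd_one⟩
  obtain ⟨j₀, hj₀O, hj₀min⟩ :=
    O.exists_min_image (fun i => (b.take i).alternatingSum) ⟨1, h1O⟩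
  set M : Finset ℕ :=
    O.filter (fun i => (b.take i).alternatingSum ≤ (b.take j₀).alternatingSum) with hMdef
  have hMne : M.Nonempty := ⟨j₀, by simp [hMdef, hj₀O]⟩
  refine ⟨M.max' hMne, ?_, ?_, ?_, ?_, ?_, ?_, ?_⟩
  all_goals
    have hjM : M.max' hMne ∈ M := M.max'_mem hMne
    set j := M.max' hMne with hjdef
    have hjO : j ∈ O := (Finset.mem_filter.mp hjM).1
    have hjodd : Odd j := (Finset.mem_filter.mp hjO).2
    have hjq : j < b.length := Finset.mem_range.mp (Finset.mem_filter.mp hjO).1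
    have hjmin0 : (b.take j).alternatingSum ≤ (b.take j₀).alternatingSum :=
      (Finset.mem_filter.mp hjM).2
    have hmin : ∀ i : ℕ, Odd i → i < b.length →
        (b.take j).alternatingSum ≤ (b.take i).alternatingSum := by
      intro i hi hiq
      exact hjmin0.trans (hj₀min i (by
        simp only [hOdef, Finset.mem_filter, Finset.mem_range]; exact ⟨hiq, hi⟩))
    obtain ⟨t, ht⟩ := hjodd
  · -- Odd j
    exact ⟨t, ht⟩
  · -- j < b.length
    exact hjq
  · -- IsSlice (b.take j)
    refine ⟨?_, ?_, ?_⟩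
    · rw [List.length_take, min_eq_left hjq.le]; exact ⟨t, ht⟩
    · intro k hk h2k
      rw [List.length_take, min_eq_left hjq.le] at h2k
      rw [List.take_take, min_eq_left h2k]
      exact take_even_nonpos b ⟨s, hs⟩ hrev hsum ⟨k, by omega⟩ (by omega)
    · intro k hk h2k
      rw [List.length_reverse, List.length_take, min_eq_left hjq.le] at h2k
      have hlen : (b.take j).length = j := by rw [List.length_take, min_eq_left hjq.le]
      rw [rev_take (b.take j) (2 * k), hlen, List.drop_take]
      have hdl : (List.take (j - (j - 2 * k)) (List.drop (j - 2 * k) b)).length = 2 * k := by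
        rw [List.length_take, List.length_drop]; omega
      rw [altSum_reverse_even _ (by rw [hdl]; exact ⟨k, by omega⟩)]
      have h5 := altSum_take_add b (show j - 2 * k ≤ b.length by omega) (2 * k)
      have h7 : j - 2 * k + 2 * k = j := by omega
      rw [h7, Odd.neg_one_pow ⟨t - k, by omega⟩, neg_one_zsmul] at h5
      have h6 := hmin (j - 2 * k) ⟨t - k, by omega⟩ (by omega)
      have h8 : j - (j - 2 * k) = 2 * k := by omega
      rw [h8] at hdl ⊢
      linarith
  · -- IsSlice (b.drop j)
    refine ⟨?_, ?_, ?_⟩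
    · rw [List.length_drop]; exact ⟨s - t - 1, by omega⟩
    · intro k hk h2k
      rw [List.length_drop] at h2k
      have h5 := altSum_take_add b hjq.le (2 * k)
      rw [Odd.neg_one_pow ⟨t, ht⟩, neg_one_zsmul] at h5
      have h6 := hmin (j + 2 * k) ⟨t + k, by omega⟩ (by omega)
      linarith
    · intro k hk h2k
      rw [List.length_reverse, List.length_drop] at h2k
      have h3 : (b.drop j).reverse = b.reverse.take (b.length - j) := by
        rw [rev_take b (b.length - j), Nat.sub_sub_self hjq.le]
      rw [h3, List.take_take, min_eq_left (by omega : 2 * k ≤ b.length - j)]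
      exact hrev k hk (by rw [List.length_reverse]; omega)
  · -- weights equal
    have h2 := altSum_drop b hjq.le
    rw [hsum, Odd.neg_one_pow ⟨t, ht⟩, neg_one_zsmul] at h2
    linarith
  · -- minimality
    exact hmin
  · -- maximality
    intro i hi hiq hSi
    refine M.le_max' i ?_
    simp only [hMdef, hOdef, Finset.mem_filter, Finset.mem_range]
    exact ⟨⟨hiq, hi⟩, by rw [hSi]; exact hjmin0⟩
end

section
/- Let (a_1, …, a_n) be a sequence of reals, and suppose there exists an even p ≤ n with Σ_{i=1}^p (−1)^{i−1} a_i > 0; let p be the smallest such index. Let j be the largest odd number j < p such that Σ_{i=1}^j (−1)^{i−1} a_i is minimal among odd indices less than p. Then (a_1, …, a_j) is a slice. -/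
/-!
Below `p` every even prefix has non-positive alternating sum, so the prefix `(a_1, …, a_j)`
satisfies (ASC). For its reverse, an even-length prefix of the reverse is a suffix of
`(a_1, …, a_j)` of even length `t`, whose alternating sum equals `S_j - S_{j-t}`, where `S_i`
is the `i`-th initial alternating sum; since `j - t` is odd and below `p`, minimality of
`S_j` makes this non-positive.
-/

section AlternatingSum

variable {G : Type*} [AddCommGroup G]

theorem List.alternatingSum_take_reverse_of_odd_of_even {l : List G} {t : ℕ}
    (hl : Odd l.length) (ht : Even t) (htl : t ≤ l.length) :
    (l.reverse.take t).alternatingSum =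
      l.alternatingSum - (l.take (l.length - t)).alternatingSum := by
  have hodd : Odd (l.length - t) := Nat.Odd.sub_even htl hl ht
  have hsplit := List.alternatingSum_append (l.take (l.length - t)) (l.drop (l.length - t))
  rw [List.take_append_drop, List.length_take_of_le (Nat.sub_le _ _), hodd.neg_one_pow,
    neg_one_zsmul] at hsplit
  have hdrop : (l.drop (l.length - t)).length = t := by
    rw [List.length_drop]; omega
  rw [List.take_reverse, List.alternatingSum_reverse, hdrop, (ht.add_one).neg_one_pow,
    neg_one_zsmul, hsplit]
  abel

end AlternatingSum

theorem ASC.reverse_of_forall_odd_le {l : List ℝ} (hl : Odd l.length)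
    (hmin : ∀ i : ℕ, Odd i → i < l.length → l.alternatingSum ≤ (l.take i).alternatingSum) :
    ASC l.reverse := by
  intro k hk h2k
  rw [List.length_reverse] at h2k
  rw [List.alternatingSum_take_reverse_of_odd_of_even hl (even_two_mul k) h2k, sub_nonpos]
  exact hmin _ (Nat.Odd.sub_even h2k hl (even_two_mul k)) (by omega)

theorem ASC.take_of_lt {a : List ℝ} {p j : ℕ}
    (hpmin : ∀ q : ℕ, Even q → q ≤ a.length → 0 < (a.take q).alternatingSum → p ≤ q)
    (hjp : j < p) : ASC (a.take j) := by
  intro k _ h2k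
  rw [List.take_take, min_eq_left (h2k.trans (List.length_take_le _ _))]
  by_contra! hpos
  have := hpmin (2 * k) (even_two_mul k) (h2k.trans (List.length_take_le' _ _)) hpos
  rw [List.length_take] at h2k
  omega

theorem algorithm_first_block_is_slice_general (a : List ℝ) (p j : ℕ)
    (hpn : p ≤ a.length)
    (hpmin : ∀ q : ℕ, Even q → q ≤ a.length → 0 < (a.take q).alternatingSum → p ≤ q)
    (hj : Odd j) (hjp : j < p)
    (hjmin : ∀ i : ℕ, Odd i → i < p →
      (a.take j).alternatingSum ≤ (a.take i).alternatingSum) :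
    IsSlice (a.take j) := by
  have hlen : (a.take j).length = j := List.length_take_of_le (hjp.le.trans hpn)
  have hodd : Odd (a.take j).length := by rwa [hlen]
  refine ⟨hodd, ASC.take_of_lt hpmin hjp, ASC.reverse_of_forall_odd_le hodd ?_⟩
  intro i hi hij
  rw [hlen] at hij
  rw [List.take_take, min_eq_left hij.le]
  exact hjmin i hi (hij.trans hjp)

/-- Step A of the algorithm: if p is the smallest even index with positive initial
alternating sum and j is the largest odd index < p minimizing the initial alternating
sum, then (a_1,…,a_j) is a slice. -/
theorem algorithm_first_block_is_slice (a : List ℝ) (p j : ℕ)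
    (hp : Even p) (hpn : p ≤ a.length) (hppos : 0 < (a.take p).alternatingSum)
    (hpmin : ∀ q : ℕ, Even q → q ≤ a.length → 0 < (a.take q).alternatingSum → p ≤ q)
    (hj : Odd j) (hjp : j < p)
    (hjmin : ∀ i : ℕ, Odd i → i < p →
      (a.take j).alternatingSum ≤ (a.take i).alternatingSum)
    (hjmax : ∀ i : ℕ, Odd i → i < p →
      (a.take i).alternatingSum = (a.take j).alternatingSum → i ≤ j) :
    IsSlice (a.take j) :=
  algorithm_first_block_is_slice_general a p j hpn hpmin hj hjp hjmin
end

section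
/- Let V be the two-ended-stack value function on lists of reals: V([]) = 0 and, for a nonempty list l, V(l) = max(head(l) − V(tail(l)), last(l) − V(init(l))). Then for any two lists a = (a_1, …, a_n) and b = (b_1, …, b_n) of the same length, |V(a) − V(b)| ≤ Σ_{i=1}^n |a_i − b_i|. -/
/-- The value of the two-ended stack game: the player to move takes the left or right
end, maximizing own total minus opponent's. -/
noncomputable def tesVal : List ℝ → ℝ
  | [] => 0
  | a :: l =>
      max (a - tesVal l)
        ((a :: l).getLast (List.cons_ne_nil a l) - tesVal ((a :: l).dropLast))
  termination_by l => l.length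
  decreasing_by
  · simp
  · simp [List.length_dropLast]

/-! Both moves change the outcome by the difference of the two entries taken plus the
difference of the values of the remaining sublists, which by induction on the length is at
most the ℓ¹-distance of those sublists; `|max a b - max c d| ≤ max |a - c| |b - d|` then
combines the two moves. -/

theorem List.sum_zipWith_eq_sum_zipWith_dropLast_add {α β M : Type*} [AddMonoid M]
    (f : α → β → M) {a : List α} {b : List β} (ha : a ≠ []) (hb : b ≠ [])
    (h : a.length = b.length) :
    (zipWith f a b).sum =
      (zipWith f a.dropLast b.dropLast).sum + f (a.getLast ha) (b.getLast hb) := by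
  conv_lhs => rw [← dropLast_append_getLast ha, ← dropLast_append_getLast hb]
  rw [zipWith_append (by simp [h])]
  simp

theorem abs_sub_sub_sub_le_of_abs_sub_le {G : Type*} [AddCommGroup G] [LinearOrder G]
    [IsOrderedAddMonoid G] {x y u v d : G} (h : |u - v| ≤ d) :
    |(x - u) - (y - v)| ≤ |x - y| + d :=
  calc |(x - u) - (y - v)| = |(x - y) - (u - v)| := by rw [sub_sub_sub_comm]
    _ ≤ |x - y| + |u - v| := abs_sub _ _
    _ ≤ |x - y| + d := by gcongr

/-- Lipschitz property of the two-ended stack value in the ℓ¹-norm of the weights. -/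
theorem tesVal_lipschitz (a b : List ℝ) (h : a.length = b.length) :
    |tesVal a - tesVal b| ≤ (List.zipWith (fun x y => |x - y|) a b).sum := by
  match a, b, h with
  | [], [], _ => simp [tesVal]
  | x :: l, y :: m, h =>
    have hl : l.length = m.length := by simpa using h
    have hinit : (x :: l).dropLast.length = (y :: m).dropLast.length := by simp [hl]
    rw [tesVal, tesVal]
    refine (abs_max_sub_max_le_max _ _ _ _).trans (max_le ?_ ?_)
    · simpa using abs_sub_sub_sub_le_of_abs_sub_le (x := x) (y := y) (tesVal_lipschitz l m hl)
    · rw [List.sum_zipWith_eq_sum_zipWith_dropLast_add _ (List.cons_ne_nil x l)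
        (List.cons_ne_nil y m) h, add_comm]
      exact abs_sub_sub_sub_le_of_abs_sub_le (tesVal_lipschitz _ _ hinit)
termination_by a.length
end

section
/- Let V be the two-ended-stack value function: V([]) = 0 and V(l) = max(head(l) − V(tail(l)), last(l) − V(init(l))) for nonempty l. If the list (a_1, …, a_n) has even length, then V(a_1, …, a_n) ≥ |Σ_{i=1}^n (−1)^{i−1} a_i|. -/
lemma tesVal_cons (a : ℝ) (l : List ℝ) :
    tesVal (a :: l) =
      max (a - tesVal l)
        ((a :: l).getLast (List.cons_ne_nil a l) - tesVal ((a :: l).dropLast)) := by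
  rw [tesVal]

lemma tesVal_key : ∀ n : ℕ, ∀ l : List ℝ, l.length = n →
    (Even n → l.alternatingSum ≤ tesVal l ∧ -l.alternatingSum ≤ tesVal l) ∧
    (Odd n → tesVal l ≤ l.alternatingSum) := by
  intro n
  induction n using Nat.strong_induction_on with
  | _ n ih =>
    intro l hl
    constructor
    · -- even case
      intro hev
      match l, hl with
      | [], hl => simp [tesVal]
      | a :: l', hl =>
        have hl' : l'.length = n - 1 := by simp at hl; omega
        have hne : l' ≠ [] := by
          rintro rfl
          simp at hl; subst hl; simp at hev
        have hodd : Odd (n - 1) := by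
          rcases hev with ⟨k, hk⟩
          have : 1 ≤ n := by simp at hl; omega
          exact ⟨k - 1, by omega⟩
        have hlt : n - 1 < n := by simp at hl; omega
        have hO := (ih (n - 1) hlt l' hl').2 hodd
        rw [tesVal_cons]
        constructor
        · have h1 : a - l'.alternatingSum ≤ a - tesVal l' := by linarith
          rw [List.alternatingSum_cons]
          exact le_trans h1 (le_max_left _ _)
        · -- right option
          set L := a :: l' with hL
          have hne2 : L ≠ [] := by simp [hL]
          set d := L.dropLast with hd
          set b := L.getLast hne2 with hb
          have hdec : L = d ++ [b] := (List.dropLast_append_getLast hne2).symm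
          have hdlen : d.length = n - 1 := by
            have := congrArg List.length hdec
            simp at this
            omega
          have hOd := (ih (n - 1) hlt d hdlen).2 hodd
          have halt : L.alternatingSum = d.alternatingSum - b := by
            rw [hdec, List.alternatingSum_append]
            have : Odd d.length := hdlen ▸ hodd
            rw [this.neg_one_pow]; simp [sub_eq_add_neg]
          have : -L.alternatingSum ≤ b - tesVal d := by
            rw [halt]; linarith
          exact le_trans this (le_max_right _ _)
    · -- odd case
      intro hodd
      match l, hl with
      | [], hl => simp at hl; subst hl; simp at hodd
      | c :: t, hl =>
        have hl' : t.length = n - 1 := by simp at hl; omega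
        have hn1 : 1 ≤ n := by simp at hl; omega
        have heven : Even (n - 1) := by
          rcases hodd with ⟨k, hk⟩; exact ⟨k, by omega⟩
        have hlt : n - 1 < n := by omega
        have hEt := ((ih (n - 1) hlt t hl').1 heven).1
        rw [tesVal_cons]
        set L := c :: t with hL
        have hne2 : L ≠ [] := by simp [hL]
        set d := L.dropLast with hd
        set b := L.getLast hne2 with hb
        have hdec : L = d ++ [b] := (List.dropLast_append_getLast hne2).symm
        have hdlen : d.length = n - 1 := by
          have := congrArg List.length hdec
          simp at this
          omega
        have hEd := ((ih (n - 1) hlt d hdlen).1 heven).2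
        apply max_le
        · rw [List.alternatingSum_cons]
          linarith
        · have halt : L.alternatingSum = d.alternatingSum + b := by
            rw [hdec, List.alternatingSum_append]
            have : Even d.length := hdlen ▸ heven
            rw [this.neg_one_pow]; simp
          rw [halt]
          linarith

/-- The color strategy: for an even-length two-ended stack, the first player can secure
at least the absolute value of the alternating sum. -/
theorem tesVal_color_strategy (a : List ℝ) (h : Even a.length) :
    |a.alternatingSum| ≤ tesVal a := by
  obtain ⟨h1, h2⟩ := (tesVal_key a.length a rfl).1 h
  exact abs_le.2 ⟨by linarith, h1⟩
end

section
/- Let V be the two-ended-stack value function: V([]) = 0 and V(l) = max(head(l) − V(tail(l)), last(l) − V(init(l))) for nonempty l. Suppose 1 < i < n and a_i = max(a_1, …, a_n). Then V(a_1, …, a_n) = V(a_1, …, a_{i−2}, a_{i−1} − a_i + a_{i+1}, a_{i+2}, …, a_n). -/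
lemma tesVal_nil : tesVal [] = 0 := by rw [tesVal]

lemma tesVal_singleton (a : ℝ) : tesVal [a] = a := by
  rw [tesVal_cons]; simp [tesVal_nil]

lemma tesVal_cons_concat (a b : ℝ) (l : List ℝ) :
    tesVal (a :: (l ++ [b])) = max (a - tesVal (l ++ [b])) (b - tesVal (a :: l)) := by
  rw [tesVal_cons]
  congr 1
  congr 1
  · show (a :: (l ++ [b])).getLast _ = b
    simp [List.getLast_append]
  · congr 1
    rw [show a :: (l ++ [b]) = (a :: l) ++ [b] from rfl, List.dropLast_concat]

lemma tesVal_cons_ge (a : ℝ) (l : List ℝ) : a - tesVal l ≤ tesVal (a :: l) := by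
  rw [tesVal_cons]; exact le_max_left _ _

lemma tesVal_concat_ge (b : ℝ) (l : List ℝ) : b - tesVal l ≤ tesVal (l ++ [b]) := by
  cases l with
  | nil => simp [tesVal_singleton, tesVal_nil]
  | cons a t =>
      rw [List.cons_append, tesVal_cons_concat]; exact le_max_right _ _

lemma tesVal_pair (a b : ℝ) : tesVal [a, b] = max (a - b) (b - a) := by
  rw [show [a, b] = a :: (([] : List ℝ) ++ [b]) from rfl, tesVal_cons_concat]
  simp [tesVal_singleton]

/-- Lemma F -/
lemma lemF : ∀ (n : ℕ) (l : List ℝ) (b y : ℝ), l.length ≤ n →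
    (∀ w ∈ l ++ [b], w ≤ y) → tesVal (l ++ [b]) + tesVal l ≤ 2 * y - b := by
  intro n
  induction n with
  | zero =>
      intro l b y hl hm
      have : l = [] := List.length_eq_zero_iff.mp (Nat.le_zero.mp hl)
      subst this
      have hb : b ≤ y := hm b (by simp)
      simp [tesVal_singleton, tesVal_nil]
      linarith
  | succ n ih =>
      intro l b y hl hm
      rcases l with _ | ⟨h, t⟩
      · have hb : b ≤ y := hm b (by simp)
        simp [tesVal_singleton, tesVal_nil]
        linarith
      · have hb : b ≤ y := hm b (by simp)
        have hh : h ≤ y := hm h (by simp)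
        rw [List.cons_append, tesVal_cons_concat]
        rcases max_choice (h - tesVal (t ++ [b])) (b - tesVal (h :: t)) with hc | hc <;> rw [hc]
        · -- V = h - V(t ++ [b])
          rcases List.eq_nil_or_concat t with rfl | ⟨u, c, rfl⟩
          · simp [tesVal_singleton]
            linarith
          · simp only [List.concat_eq_append] at hl hm hc ⊢
            have hVt : b - tesVal (u ++ [c]) ≤ tesVal (u ++ [c] ++ [b]) :=
              tesVal_concat_ge _ _
            have hVh : h - tesVal u ≤ tesVal (h :: u) := tesVal_cons_ge _ _
            rw [tesVal_cons_concat h c u]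
            rcases max_choice (h - tesVal (u ++ [c])) (c - tesVal (h :: u)) with hc2 | hc2 <;>
              rw [hc2]
            · linarith
            · have hulen : u.length ≤ n := by
                simp at hl; omega
              have hF := ih u c y hulen (by
                intro w hw; apply hm; simp at hw ⊢; tauto)
              linarith
        · -- V = b - V(h :: t)
          linarith

lemma lemF' (l : List ℝ) (b y : ℝ) (hm : ∀ w ∈ l ++ [b], w ≤ y) :
    tesVal (l ++ [b]) + tesVal l ≤ 2 * y - b := lemF l.length l b y le_rfl hm

/-- Lemma A: taking a maximal head is exactly optimal. -/
lemma lemA : ∀ (n : ℕ) (l : List ℝ) (y : ℝ), l.length ≤ n →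
    (∀ w ∈ l, w ≤ y) → tesVal (y :: l) = y - tesVal l := by
  intro n
  induction n with
  | zero =>
      intro l y hl hm
      have : l = [] := List.length_eq_zero_iff.mp (Nat.le_zero.mp hl)
      subst this
      simp [tesVal_singleton, tesVal_nil]
  | succ n ih =>
      intro l y hl hm
      rcases List.eq_nil_or_concat l with rfl | ⟨u, b, rfl⟩
      · simp [tesVal_singleton, tesVal_nil]
      · simp only [List.concat_eq_append] at hl hm ⊢
        have hb : b ≤ y := hm b (by simp)
        have hulen : u.length ≤ n := by simp at hl; omega
        have hA : tesVal (y :: u) = y - tesVal u :=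
          ih u y hulen (by intro w hw; apply hm; simp [hw])
        have hF : tesVal (u ++ [b]) + tesVal u ≤ 2 * y - b :=
          lemF' u b y hm
        rw [tesVal_cons_concat]
        apply max_eq_left
        rw [hA]
        linarith

lemma lemA' (l : List ℝ) (y : ℝ) (hm : ∀ w ∈ l, w ≤ y) :
    tesVal (y :: l) = y - tesVal l := lemA l.length l y le_rfl hm

/-- Lipschitz in the head entry. -/
lemma lemL : ∀ (n : ℕ) (l : List ℝ) (a b : ℝ), l.length ≤ n →
    |tesVal (a :: l) - tesVal (b :: l)| ≤ |a - b| := by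
  intro n
  induction n with
  | zero =>
      intro l a b hl
      have : l = [] := List.length_eq_zero_iff.mp (Nat.le_zero.mp hl)
      subst this
      simp [tesVal_singleton]
  | succ n ih =>
      intro l a b hl
      rcases List.eq_nil_or_concat l with rfl | ⟨u, c, rfl⟩
      · simp [tesVal_singleton]
      · simp only [List.concat_eq_append] at hl ⊢
        have hulen : u.length ≤ n := by simp at hl; omega
        rw [tesVal_cons_concat a c u, tesVal_cons_concat b c u]
        refine le_trans (abs_max_sub_max_le_max _ _ _ _) ?_
        apply max_le
        · have : a - tesVal (u ++ [c]) - (b - tesVal (u ++ [c])) = a - b := by ring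
          rw [this]
        · have : c - tesVal (a :: u) - (c - tesVal (b :: u)) =
              -(tesVal (a :: u) - tesVal (b :: u)) := by ring
          rw [this, abs_neg]
          exact ih u a b hulen

lemma lemL' (l : List ℝ) (a b : ℝ) :
    |tesVal (a :: l) - tesVal (b :: l)| ≤ |a - b| := lemL l.length l a b le_rfl

lemma tesVal_reverse : ∀ (n : ℕ) (l : List ℝ), l.length ≤ n →
    tesVal l.reverse = tesVal l := by
  intro n
  induction n with
  | zero =>
      intro l hl
      have : l = [] := List.length_eq_zero_iff.mp (Nat.le_zero.mp hl)
      subst this; rfl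
  | succ n ih =>
      intro l hl
      rcases l with _ | ⟨a, t⟩
      · rfl
      · rcases List.eq_nil_or_concat t with rfl | ⟨u, b, rfl⟩
        · rfl
        · simp only [List.concat_eq_append] at hl ⊢
          have h1 : (a :: (u ++ [b])).reverse = b :: (u.reverse ++ [a]) := by simp
          rw [h1, tesVal_cons_concat b a u.reverse, tesVal_cons_concat a b u]
          have e1 : tesVal (u.reverse ++ [a]) = tesVal (a :: u) := by
            rw [show u.reverse ++ [a] = (a :: u).reverse by simp]
            exact ih (a :: u) (by simp at hl ⊢; omega)
          have e2 : tesVal (b :: u.reverse) = tesVal (u ++ [b]) := by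
            rw [show b :: u.reverse = (u ++ [b]).reverse by simp]
            exact ih (u ++ [b]) (by simp at hl ⊢; omega)
          rw [e1, e2, max_comm]

lemma tesVal_reverse' (l : List ℝ) : tesVal l.reverse = tesVal l :=
  tesVal_reverse l.length l le_rfl

lemma condense_left_nil (x y z : ℝ) (hm : ∀ w ∈ [x, y, z], w ≤ y) :
    tesVal [x, y, z] = tesVal [x - y + z] := by
  have hx : x ≤ y := hm x (by simp)
  have hz : z ≤ y := hm z (by simp)
  have e2 : tesVal [y, z] = y - z := by
    rw [tesVal_pair]; exact max_eq_left (by linarith)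
  have e3 : tesVal [x, y] = y - x := by
    rw [tesVal_pair]; exact max_eq_right (by linarith)
  rw [show ([x, y, z] : List ℝ) = x :: ([y] ++ [z]) from rfl,
    tesVal_cons_concat, tesVal_singleton]
  rw [show ([y] ++ [z] : List ℝ) = [y, z] from rfl, e2,
    show (x :: [y] : List ℝ) = [x, y] from rfl, e3]
  rw [show z - (y - x) = x - (y - z) by ring, max_self]
  ring

lemma condense_left : ∀ (n : ℕ) (q : List ℝ) (x y z : ℝ), q.length ≤ n →
    (∀ w ∈ x :: y :: z :: q, w ≤ y) →
    tesVal (x :: y :: z :: q) = tesVal ((x - y + z) :: q) := by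
  intro n
  induction n with
  | zero =>
      intro q x y z hq hm
      have : q = [] := List.length_eq_zero_iff.mp (Nat.le_zero.mp hq)
      subst this
      rw [tesVal_singleton]
      rw [show tesVal [x, y, z] = tesVal [x - y + z] from condense_left_nil x y z hm,
        tesVal_singleton]
  | succ n ih =>
      intro q x y z hq hm
      rcases List.eq_nil_or_concat q with rfl | ⟨m, L, rfl⟩
      · rw [show tesVal [x, y, z] = tesVal [x - y + z] from condense_left_nil x y z hm]
      · simp only [List.concat_eq_append] at hq hm ⊢
        have hx : x ≤ y := hm x (by simp)
        have hmlen : m.length ≤ n := by simp at hq; omega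
        have f1 := tesVal_cons_concat x L (y :: z :: m)
        simp only [List.cons_append] at f1
        have f2 : tesVal (y :: z :: (m ++ [L])) = y - tesVal (z :: (m ++ [L])) :=
          lemA' (z :: (m ++ [L])) y (by intro w hw; apply hm; simp at hw ⊢; tauto)
        have f3 : tesVal (x :: y :: z :: m) = tesVal ((x - y + z) :: m) :=
          ih m x y z hmlen (by intro w hw; apply hm; simp at hw ⊢; tauto)
        have f4 := tesVal_cons_concat (x - y + z) L m
        have f5 := tesVal_cons_concat z L m
        have f6 : z - tesVal (m ++ [L]) ≤ tesVal (z :: (m ++ [L])) := tesVal_cons_ge _ _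
        have f7 := lemL' m (x - y + z) z
        have f8 : tesVal ((x - y + z) :: m) ≤ tesVal (z :: m) + (y - x) := by
          have habs : |x - y + z - z| = y - x := by
            rw [show x - y + z - z = -(y - x) by ring, abs_neg]
            exact abs_of_nonneg (by linarith)
          rw [habs] at f7
          have := le_abs_self (tesVal ((x - y + z) :: m) - tesVal (z :: m))
          linarith
        rw [f1, f2, f3, f4]
        apply le_antisymm <;> apply max_le
        · rcases max_choice (z - tesVal (m ++ [L])) (L - tesVal (z :: m)) with hc | hc <;>
            rw [hc] at f5
          · refine le_trans (le_of_eq ?_) (le_max_left _ _)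
            rw [f5]; ring
          · refine le_trans ?_ (le_max_right _ _)
            rw [f5]
            linarith
        · exact le_max_right _ _
        · refine le_trans ?_ (le_max_left _ _)
          linarith
        · exact le_max_right _ _

lemma main_aux : ∀ (n : ℕ) (p q : List ℝ) (x y z : ℝ), p.length + q.length ≤ n →
    (∀ w ∈ p ++ x :: y :: z :: q, w ≤ y) →
    tesVal (p ++ x :: y :: z :: q) = tesVal (p ++ (x - y + z) :: q) := by
  intro n
  induction n with
  | zero =>
      intro p q x y z hpq hm
      have hp : p = [] := List.length_eq_zero_iff.mp (by omega)
      subst hp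
      simp only [List.nil_append] at hm ⊢
      exact condense_left q.length q x y z le_rfl hm
  | succ n ih =>
      intro p q x y z hpq hm
      rcases p with _ | ⟨a, p'⟩
      · simp only [List.nil_append] at hm ⊢
        exact condense_left q.length q x y z le_rfl hm
      · rcases List.eq_nil_or_concat q with rfl | ⟨m, L, rfl⟩
        · -- q = [] : use reverse symmetry and condense_left
          have hrev1 : ((a :: p') ++ [x, y, z]).reverse
              = z :: y :: x :: (a :: p').reverse := by simp
          have hrev2 : ((a :: p') ++ [x - y + z]).reverse
              = (x - y + z) :: (a :: p').reverse := by simp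
          have hm' : ∀ w ∈ z :: y :: x :: (a :: p').reverse, w ≤ y := by
            intro w hw; apply hm; simp at hw ⊢; tauto
          calc tesVal ((a :: p') ++ [x, y, z])
              = tesVal (((a :: p') ++ [x, y, z]).reverse) := (tesVal_reverse' _).symm
            _ = tesVal (z :: y :: x :: (a :: p').reverse) := by rw [hrev1]
            _ = tesVal ((z - y + x) :: (a :: p').reverse) :=
                condense_left _ _ z y x le_rfl hm'
            _ = tesVal ((x - y + z) :: (a :: p').reverse) := by
                rw [show z - y + x = x - y + z by ring]
            _ = tesVal (((a :: p') ++ [x - y + z]).reverse) := by rw [hrev2]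
            _ = tesVal ((a :: p') ++ [x - y + z]) := tesVal_reverse' _
        · -- p and q both nonempty
          simp only [List.concat_eq_append] at hpq hm ⊢
          have f1 := tesVal_cons_concat a L (p' ++ x :: y :: z :: m)
          have f2 := tesVal_cons_concat a L (p' ++ (x - y + z) :: m)
          simp only [List.cons_append, List.append_assoc] at f1 f2 ⊢
          have ih1 : tesVal (p' ++ x :: y :: z :: (m ++ [L]))
              = tesVal (p' ++ (x - y + z) :: (m ++ [L])) :=
            ih p' (m ++ [L]) x y z (by simp at hpq ⊢; omega)
              (by intro w hw; apply hm; simp at hw ⊢; tauto)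
          have ih2 : tesVal ((a :: p') ++ x :: y :: z :: m)
              = tesVal ((a :: p') ++ (x - y + z) :: m) :=
            ih (a :: p') m x y z (by simp at hpq ⊢; omega)
              (by intro w hw; apply hm; simp at hw ⊢; tauto)
          simp only [List.cons_append] at ih1 ih2
          rw [f1, f2, ih1, ih2]

/-- Condensation at an interior maximum: replacing consecutive entries x, y, z
(with y a maximum of the whole sequence, at an interior position) by x - y + z
does not change the two-ended stack value. -/
theorem tesVal_condense (p q : List ℝ) (x y z : ℝ)
    (hmax : ∀ w ∈ p ++ x :: y :: z :: q, w ≤ y) :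
    tesVal (p ++ x :: y :: z :: q) = tesVal (p ++ (x - y + z) :: q) := 
  main_aux (p.length + q.length) p q x y z le_rfl hmax
end

section
/- Let A ⊆ ℝ be a measurable set such that the symmetric difference A Δ (−∞, 0) has finite Lebesgue measure. Then the quantity v_c(A) = c + μ(A \ (−∞, c)) − μ((−∞, c) \ A) is independent of the choice of c ∈ ℝ (and is finite). -/
open MeasureTheory

lemma value_fin_aux (A : Set ℝ) (hfin : volume (symmDiff A (Set.Iio (0 : ℝ))) < ⊤) (c : ℝ) :
    volume (A \ Set.Iio c) < ⊤ ∧ volume (Set.Iio c \ A) < ⊤ := by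
  have hsd : volume (A \ Set.Iio (0:ℝ)) < ⊤ ∧ volume (Set.Iio (0:ℝ) \ A) < ⊤ := by
    rw [Set.symmDiff_def] at hfin
    constructor
    · exact lt_of_le_of_lt (measure_mono Set.subset_union_left) hfin
    · exact lt_of_le_of_lt (measure_mono Set.subset_union_right) hfin
  constructor
  · have hsub : A \ Set.Iio c ⊆ (A \ Set.Iio 0) ∪ Set.Ico c 0 := by
      intro x hx
      rcases lt_or_ge x 0 with h | h
      · exact Or.inr ⟨not_lt.mp hx.2, h⟩
      · exact Or.inl ⟨hx.1, not_lt.mpr h⟩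
    refine lt_of_le_of_lt ((measure_mono hsub).trans (measure_union_le _ _)) ?_
    exact ENNReal.add_lt_top.mpr ⟨hsd.1, by simp [Real.volume_Ico]⟩
  · have hsub : Set.Iio c \ A ⊆ (Set.Iio (0:ℝ) \ A) ∪ Set.Ico 0 c := by
      intro x hx
      rcases lt_or_ge x 0 with h | h
      · exact Or.inl ⟨h, hx.2⟩
      · exact Or.inr ⟨h, hx.1⟩
    refine lt_of_le_of_lt ((measure_mono hsub).trans (measure_union_le _ _)) ?_
    exact ENNReal.add_lt_top.mpr ⟨hsd.2, by simp [Real.volume_Ico]⟩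

lemma value_main_aux (A : Set ℝ) (hA : MeasurableSet A)
    (hfin : volume (symmDiff A (Set.Iio (0 : ℝ))) < ⊤) {c d : ℝ} (hcd : c ≤ d) :
    c + (volume (A \ Set.Iio c)).toReal - (volume (Set.Iio c \ A)).toReal
      = d + (volume (A \ Set.Iio d)).toReal - (volume (Set.Iio d \ A)).toReal := by
  have hIco : volume (Set.Ico c d) < ⊤ := by simp [Real.volume_Ico]
  have hfin1 := (value_fin_aux A hfin c).1
  have hfin2 := (value_fin_aux A hfin c).2
  have hfin3 := (value_fin_aux A hfin d).1
  have hfin4 := (value_fin_aux A hfin d).2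
  have hfinAI : volume (A ∩ Set.Ico c d) < ⊤ :=
    lt_of_le_of_lt (measure_mono Set.inter_subset_right) hIco
  have hfinIA : volume (Set.Ico c d \ A) < ⊤ :=
    lt_of_le_of_lt (measure_mono Set.diff_subset) hIco
  -- decomposition 1
  have e1 : A \ Set.Iio c = (A \ Set.Iio d) ∪ (A ∩ Set.Ico c d) := by
    ext x
    simp only [Set.mem_diff, Set.mem_union, Set.mem_inter_iff, Set.mem_Iio, Set.mem_Ico, not_lt]
    constructor
    · rintro ⟨hxA, hxc⟩
      rcases le_or_gt d x with h | h
      · exact Or.inl ⟨hxA, h⟩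
      · exact Or.inr ⟨hxA, hxc, h⟩
    · rintro (⟨hxA, h⟩ | ⟨hxA, h1, h2⟩)
      · exact ⟨hxA, le_trans hcd h⟩
      · exact ⟨hxA, h1⟩
  have d1 : Disjoint (A \ Set.Iio d) (A ∩ Set.Ico c d) := by
    rw [Set.disjoint_left]
    rintro x ⟨_, hx⟩ ⟨_, _, hlt⟩
    exact hx hlt
  have m1 : volume (A \ Set.Iio c)
      = volume (A \ Set.Iio d) + volume (A ∩ Set.Ico c d) := by
    rw [e1, measure_union d1 (hA.inter measurableSet_Ico)]
  -- decomposition 2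
  have e2 : Set.Iio d \ A = (Set.Iio c \ A) ∪ (Set.Ico c d \ A) := by
    ext x
    simp only [Set.mem_diff, Set.mem_union, Set.mem_Iio, Set.mem_Ico]
    constructor
    · rintro ⟨hxd, hxA⟩
      rcases lt_or_ge x c with h | h
      · exact Or.inl ⟨h, hxA⟩
      · exact Or.inr ⟨⟨h, hxd⟩, hxA⟩
    · rintro (⟨h, hxA⟩ | ⟨⟨h1, h2⟩, hxA⟩)
      · exact ⟨lt_of_lt_of_le h hcd, hxA⟩
      · exact ⟨h2, hxA⟩
  have d2 : Disjoint (Set.Iio c \ A) (Set.Ico c d \ A) := by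
    rw [Set.disjoint_left]
    rintro x ⟨hx, _⟩ ⟨⟨hc, _⟩, _⟩
    exact absurd hx (not_lt.mpr hc)
  have m2 : volume (Set.Iio d \ A)
      = volume (Set.Iio c \ A) + volume (Set.Ico c d \ A) := by
    rw [e2, measure_union d2 (measurableSet_Ico.diff hA)]
  -- split of Ico
  have e3 : (A ∩ Set.Ico c d) ∪ (Set.Ico c d \ A) = Set.Ico c d := by
    rw [Set.inter_comm, Set.inter_union_diff]
  have d3 : Disjoint (A ∩ Set.Ico c d) (Set.Ico c d \ A) := by
    rw [Set.disjoint_left]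
    rintro x ⟨hxA, _⟩ ⟨_, hxA'⟩
    exact hxA' hxA
  have m3 : volume (A ∩ Set.Ico c d) + volume (Set.Ico c d \ A) = ENNReal.ofReal (d - c) := by
    rw [← measure_union d3 (measurableSet_Ico.diff hA), e3, Real.volume_Ico]
  have t1 : (volume (A \ Set.Iio c)).toReal
      = (volume (A \ Set.Iio d)).toReal + (volume (A ∩ Set.Ico c d)).toReal := by
    rw [m1, ENNReal.toReal_add hfin3.ne hfinAI.ne]
  have t2 : (volume (Set.Iio d \ A)).toReal
      = (volume (Set.Iio c \ A)).toReal + (volume (Set.Ico c d \ A)).toReal := by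
    rw [m2, ENNReal.toReal_add hfin2.ne hfinIA.ne]
  have t3 : (volume (A ∩ Set.Ico c d)).toReal + (volume (Set.Ico c d \ A)).toReal = d - c := by
    rw [← ENNReal.toReal_add hfinAI.ne hfinIA.ne, m3, ENNReal.toReal_ofReal (by linarith)]
  linarith

/-- For a measurable A ⊆ ℝ with μ(A Δ (−∞,0)) < ∞, the quantity
c + μ(A \ (−∞,c)) − μ((−∞,c) \ A) does not depend on c. -/
theorem value_function_well_defined (A : Set ℝ) (hA : MeasurableSet A)
    (hfin : volume (symmDiff A (Set.Iio (0 : ℝ))) < ⊤) (c d : ℝ) :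
    c + (volume (A \ Set.Iio c)).toReal - (volume (Set.Iio c \ A)).toReal
      = d + (volume (A \ Set.Iio d)).toReal - (volume (Set.Iio d \ A)).toReal := by
  rcases le_total c d with h | h
  · exact value_main_aux A hA hfin h
  · exact (value_main_aux A hA hfin h).symm
end
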